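/- Let V, W ∈ Gr₂(n,k) and x, z, x', z' ∈ 𝔽₂ⁿ. Then |⟨V_{x,z}|W_{x',z'}⟩| = 2^{dim(V ∩ W) − k} if x − x' ∈ V + W and z − z' ∈ V^⊥ + W^⊥, and |⟨V_{x,z}|W_{x',z'}⟩| = 0 otherwise. -/

import Mathlib

/-!
Both states are supported on cosets, `x + V` and `x' + W`, so their overlap is a signed sum
over `(x + V) ∩ (x' + W)`. This intersection is empty unless `x - x' ∈ V + W`, and is then a
coset of `V ∩ W`. On it the signs are a constant times the character `t ↦ (-1)^{(z - z')·t}`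
of `V ∩ W`, whose sum is `2^{dim (V ∩ W)}` or `0` according as `z - z'` lies in
`(V ∩ W)^⊥ = V^⊥ + W^⊥` or not.
-/

open scoped Classical in
/-- The coset state `|W_{x,z}⟩ = 2^{-k/2} ∑_{u ∈ W} (-1)^{z·u} |x+u⟩` in `(ℂ²)^{⊗n}`,
identified with `EuclideanSpace ℂ (Fin n → ZMod 2)` via the computational basis. -/
noncomputable def cosetState {n : ℕ} (W : Submodule (ZMod 2) (Fin n → ZMod 2))
    (x z : Fin n → ZMod 2) : EuclideanSpace ℂ (Fin n → ZMod 2) :=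
  (((Real.sqrt 2 : ℝ) : ℂ) ^ (Module.finrank (ZMod 2) W))⁻¹ •
    ∑ u : W, ((-1 : ℂ) ^ (dotProduct z (u : Fin n → ZMod 2)).val) •
      EuclideanSpace.single (x + (u : Fin n → ZMod 2)) (1 : ℂ)

/-- The dual space `W^⊥ = {y ∈ 𝔽₂ⁿ : x·y = 0 for all x ∈ W}` with respect to the standard
bilinear form `x·y = ∑ᵢ xᵢyᵢ`. -/
def dualSpace {n : ℕ} (W : Submodule (ZMod 2) (Fin n → ZMod 2)) :
    Submodule (ZMod 2) (Fin n → ZMod 2) where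
  carrier := {y | ∀ x ∈ W, dotProduct x y = 0}
  add_mem' := by
    intro a b ha hb x hx
    simp [dotProduct_add, ha x hx, hb x hx]
  zero_mem' := by
    intro x hx
    simp
  smul_mem' := by
    intro c a ha x hx
    simp [dotProduct_smul, ha x hx]

open Module

def signChar {R : Type*} [Ring R] : AddChar (ZMod 2) R where
  toFun a := (-1) ^ a.val
  map_zero_eq_one' := pow_zero _
  map_add_eq_mul' a b := by rw [ZMod.val_add, ← neg_one_pow_eq_pow_mod_two, pow_add]

lemma signChar_apply {R : Type*} [Ring R] (a : ZMod 2) : (signChar a : R) = (-1) ^ a.val := rfl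

lemma signChar_eq_one_iff {R : Type*} [Ring R] [CharZero R] {a : ZMod 2} :
    (signChar a : R) = 1 ↔ a = 0 := by
  obtain rfl | rfl : a = 0 ∨ a = 1 := by revert a; decide
  · simp
  · simp only [signChar_apply, ZMod.val_one, pow_one, one_ne_zero, iff_false]
    rw [neg_eq_iff_add_eq_zero, one_add_one_eq_two]
    exact two_ne_zero

lemma conj_signChar (a : ZMod 2) : starRingEnd ℂ (signChar a) = signChar a := by
  simp [signChar_apply]

section

open scoped Classical

variable {n : ℕ}

lemma dualSpace_eq_comap_dualAnnihilator (U : Submodule (ZMod 2) (Fin n → ZMod 2)) :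
    dualSpace U = U.dualAnnihilator.comap (dotProductEquiv (ZMod 2) (Fin n)).toLinearMap := by
  ext y
  simp [dualSpace, Submodule.mem_dualAnnihilator, dotProduct_comm]

lemma dualSpace_inf (V W : Submodule (ZMod 2) (Fin n → ZMod 2)) :
    dualSpace (V ⊓ W) = dualSpace V ⊔ dualSpace W := by
  simp only [dualSpace_eq_comap_dualAnnihilator, Subspace.dualAnnihilator_inf_eq,
    Submodule.comap_equiv_eq_map_symm, Submodule.map_sup]

lemma sum_signChar_dotProduct (U : Submodule (ZMod 2) (Fin n → ZMod 2)) (s : Fin n → ZMod 2) :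
    ∑ t : U, (signChar (s ⬝ᵥ (t : Fin n → ZMod 2)) : ℂ) =
      if s ∈ dualSpace U then 2 ^ finrank (ZMod 2) U else 0 := by
  let ψ : AddChar U ℂ := signChar.compAddMonoidHom
    ((dotProductEquiv (ZMod 2) (Fin n) s).toAddMonoidHom.comp U.subtype.toAddMonoidHom)
  have hψ : ψ = 0 ↔ s ∈ dualSpace U := by
    simp [ψ, AddChar.eq_zero_iff, signChar_eq_one_iff, dualSpace, dotProduct_comm]
  have hcard : (Fintype.card U : ℂ) = 2 ^ finrank (ZMod 2) U := by
    rw [card_eq_pow_finrank (K := ZMod 2), ZMod.card]; push_cast; rfl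
  rw [← hψ, ← hcard]
  exact ψ.sum_eq_ite

lemma cosetState_apply (W : Submodule (ZMod 2) (Fin n → ZMod 2)) (x z y : Fin n → ZMod 2) :
    cosetState W x z y = if y - x ∈ W then
      (((Real.sqrt 2 : ℝ) : ℂ) ^ finrank (ZMod 2) W)⁻¹ * signChar (z ⬝ᵥ (y - x)) else 0 := by
  simp only [cosetState, PiLp.smul_apply, WithLp.ofLp_sum, Finset.sum_apply, PiLp.single_apply,
    smul_eq_mul, mul_ite, mul_one, mul_zero]
  split_ifs with h
  · rw [Fintype.sum_eq_single ⟨y - x, h⟩]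
    · simp [signChar_apply]
    · rintro u hu
      rw [if_neg]
      rintro rfl
      exact hu (by ext; simp)
  · rw [Finset.sum_eq_zero, mul_zero]
    rintro u -
    rw [if_neg]
    rintro rfl
    simp at h

lemma inner_cosetState_cosetState (V W : Submodule (ZMod 2) (Fin n → ZMod 2))
    (x z x' z' : Fin n → ZMod 2) :
    inner ℂ (cosetState V x z) (cosetState W x' z') =
      (((Real.sqrt 2 : ℝ) : ℂ) ^ finrank (ZMod 2) V)⁻¹ *
        (((Real.sqrt 2 : ℝ) : ℂ) ^ finrank (ZMod 2) W)⁻¹ *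
      ∑ y, if y - x ∈ V ∧ y - x' ∈ W then
        (signChar (z ⬝ᵥ (y - x)) * signChar (z' ⬝ᵥ (y - x')) : ℂ) else 0 := by
  simp only [PiLp.inner_apply, cosetState_apply, Finset.mul_sum]
  refine Finset.sum_congr rfl fun y _ => ?_
  by_cases hV : y - x ∈ V <;> by_cases hW : y - x' ∈ W <;> simp [hV, hW, conj_signChar]
  ring

lemma signChar_dotProduct_sub_mul_signChar_dotProduct_add (z z' t v w : Fin n → ZMod 2) :
    (signChar (z ⬝ᵥ (t - v)) * signChar (z' ⬝ᵥ (t + w)) : ℂ) =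
      signChar (z' ⬝ᵥ w - z ⬝ᵥ v) * signChar ((z - z') ⬝ᵥ t) := by
  rw [← AddChar.map_add_eq_mul, ← AddChar.map_add_eq_mul]
  congr 1
  simp only [dotProduct_sub, dotProduct_add, sub_dotProduct, CharTwo.sub_eq_add]
  ring

lemma sum_signChar_cosets_eq_zero (V W : Submodule (ZMod 2) (Fin n → ZMod 2))
    {x x' : Fin n → ZMod 2} (z z' : Fin n → ZMod 2) (h : x - x' ∉ V ⊔ W) :
    ∑ y, (if y - x ∈ V ∧ y - x' ∈ W then
        (signChar (z ⬝ᵥ (y - x)) * signChar (z' ⬝ᵥ (y - x')) : ℂ) else 0) = 0 := by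
  refine Finset.sum_eq_zero fun y _ => if_neg ?_
  rintro ⟨hV, hW⟩
  apply h
  simpa [sup_comm] using Submodule.sub_mem_sup hW hV

lemma sum_signChar_cosets_of_sub_eq_add {V W : Submodule (ZMod 2) (Fin n → ZMod 2)}
    {x x' v w : Fin n → ZMod 2} (z z' : Fin n → ZMod 2) (hv : v ∈ V) (hw : w ∈ W)
    (h : x - x' = v + w) :
    ∑ y, (if y - x ∈ V ∧ y - x' ∈ W then
        (signChar (z ⬝ᵥ (y - x)) * signChar (z' ⬝ᵥ (y - x')) : ℂ) else 0) =
      signChar (z' ⬝ᵥ w - z ⬝ᵥ v) *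
        if z - z' ∈ dualSpace (V ⊓ W) then 2 ^ finrank (ZMod 2) ↥(V ⊓ W) else 0 := by
  -- Put `y = x - v + t`: then `y ∈ (x + V) ∩ (x' + W)` if and only if `t ∈ V ⊓ W`.
  rw [← Equiv.sum_comp (Equiv.addLeft (x - v)), ← sum_signChar_dotProduct, Finset.mul_sum]
  have hx : ∀ t, x - v + t - x = t - v := fun t => by abel
  have hx' : ∀ t, x - v + t - x' = t + w := fun t => by
    rw [← sub_eq_zero, ← sub_eq_zero.mpr h]; abel
  simp only [Equiv.coe_addLeft, hx, hx', V.sub_mem_iff_left hv, W.add_mem_iff_left hw,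
    signChar_dotProduct_sub_mul_signChar_dotProduct_add]
  rw [← Finset.sum_filter, Finset.sum_subtype (p := (· ∈ V ⊓ W)) _ (by simp)]

end

/-- For `V, W ∈ Gr₂(n,k)` and `x, z, x', z' ∈ 𝔽₂ⁿ`,
`|⟨V_{x,z}|W_{x',z'}⟩| = 2^{dim(V ∩ W) - k}` if `x - x' ∈ V + W` and
`z - z' ∈ V^⊥ + W^⊥`, and `|⟨V_{x,z}|W_{x',z'}⟩| = 0` otherwise. -/
theorem abs_inner_cosetState_cosetState {n k : ℕ}
    (V W : Submodule (ZMod 2) (Fin n → ZMod 2))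
    (hV : Module.finrank (ZMod 2) V = k) (hW : Module.finrank (ZMod 2) W = k)
    (x z x' z' : Fin n → ZMod 2) :
    (x - x' ∈ V ⊔ W ∧ z - z' ∈ dualSpace V ⊔ dualSpace W →
      ‖(inner ℂ (cosetState V x z) (cosetState W x' z') : ℂ)‖ =
        (2 : ℝ) ^ ((Module.finrank (ZMod 2) ↥(V ⊓ W) : ℤ) - (k : ℤ))) ∧
    (¬(x - x' ∈ V ⊔ W ∧ z - z' ∈ dualSpace V ⊔ dualSpace W) →
      ‖(inner ℂ (cosetState V x z) (cosetState W x' z') : ℂ)‖ = 0) := by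
  have hsqrt : (((Real.sqrt 2 : ℝ) : ℂ) ^ k)⁻¹ * (((Real.sqrt 2 : ℝ) : ℂ) ^ k)⁻¹ =
      ((2 : ℂ) ^ k)⁻¹ := by
    rw [← mul_inv, ← mul_pow, ← Complex.ofReal_mul, Real.mul_self_sqrt zero_le_two]
    norm_num
  rw [inner_cosetState_cosetState, hV, hW, hsqrt, ← dualSpace_inf]
  by_cases hx : x - x' ∈ V ⊔ W
  · obtain ⟨v, hv, w, hw, hvw⟩ := Submodule.mem_sup.mp hx
    rw [sum_signChar_cosets_of_sub_eq_add z z' hv hw hvw.symm]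
    split_ifs with hz
    · simp [hx, hz, zpow_sub₀, div_eq_inv_mul]
    · simp [hz]
  · rw [sum_signChar_cosets_eq_zero V W z z' hx]
    simp [hx]
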